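/- Let a ≥ k ≥ 1 and n ≥ a be natural numbers. The number of ways to choose and linearly arrange a out of n labelled points, and then partition the arrangement into k nonempty consecutive blocks, is C(n,a)·a!·C(a−1, k−1). Consequently, ∑_{a=k}^{n} C(n,a)·a!·C(a−1,k−1) ≤ (e^{1/2}/2)·n!·2^n for all n ≥ k ≥ 1. -/

import Mathlib

open Finset Nat

/-- After reflecting `a ↦ n - a`, the sum is `n! xⁿ` times a partial sum of the series of
`exp (1 / x)`. -/
theorem sum_descFactorial_mul_pow_le {x : ℝ} (hx : 0 < x) (n : ℕ) :
    ∑ a ∈ range (n + 1), (n.descFactorial a : ℝ) * x ^ a ≤ Real.exp (1 / x) * n ! * x ^ n := by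
  have term : ∀ a ∈ range (n + 1),
      (n.descFactorial a : ℝ) * x ^ a = n ! * x ^ n * ((1 / x) ^ (n - a) / (n - a)!) := by
    intro a hmem
    have ha : a ≤ n := Nat.lt_succ_iff.1 (mem_range.1 hmem)
    have hfac : ((n - a)! : ℝ) * n.descFactorial a = n ! := by
      exact_mod_cast factorial_mul_descFactorial ha
    have hpow : x ^ a * x ^ (n - a) = x ^ n := by rw [← pow_add, Nat.add_sub_cancel' ha]
    rw [← hfac, ← hpow, one_div_pow]
    field_simp
  calc ∑ a ∈ range (n + 1), (n.descFactorial a : ℝ) * x ^ a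
      = n ! * x ^ n * ∑ a ∈ range (n + 1), (1 / x) ^ (n - a) / (n - a)! := by
        rw [sum_congr rfl term, mul_sum]
    _ = n ! * x ^ n * ∑ j ∈ range (n + 1), (1 / x) ^ j / j ! := by
        rw [← sum_range_reflect (fun j => (1 / x) ^ j / (j ! : ℝ)) (n + 1)]
        simp only [Nat.add_sub_cancel]
    _ ≤ n ! * x ^ n * Real.exp (1 / x) := by
        gcongr
        exact Real.sum_le_exp_of_nonneg (by positivity) _
    _ = Real.exp (1 / x) * n ! * x ^ n := by ring

theorem two_mul_choose_mul_factorial_mul_choose_le {a : ℕ} (ha : 1 ≤ a) (n j : ℕ) :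
    2 * (n.choose a * a ! * (a - 1).choose j) ≤ n.descFactorial a * 2 ^ a := by
  have h2 : 2 * (a - 1).choose j ≤ 2 ^ a := by
    calc 2 * (a - 1).choose j ≤ 2 * 2 ^ (a - 1) := by gcongr; exact choose_le_two_pow _ _
      _ = 2 ^ a := by rw [← pow_succ', Nat.succ_eq_add_one, Nat.sub_add_cancel ha]
  calc 2 * (n.choose a * a ! * (a - 1).choose j)
      = n.descFactorial a * (2 * (a - 1).choose j) := by
        rw [descFactorial_eq_factorial_mul_choose]; ring
    _ ≤ n.descFactorial a * 2 ^ a := by gcongr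

theorem stmt_7_general (n k : ℕ) (hk : 1 ≤ k) :
    (∀ a : ℕ, k ≤ a → a ≤ n →
      Fintype.card ((Fin a ↪ Fin n) ×
          {s : Finset (Fin (a - 1)) // s.card = k - 1})
        = Nat.choose n a * Nat.factorial a * Nat.choose (a - 1) (k - 1)) ∧
    (∑ a ∈ Finset.Icc k n,
        (Nat.choose n a * Nat.factorial a * Nat.choose (a - 1) (k - 1) : ℝ))
      ≤ (Real.exp (1/2) / 2) * (Nat.factorial n : ℝ) * 2 ^ n := by
  refine ⟨fun a _ _ => ?_, ?_⟩
  · simp only [Fintype.card_prod, Fintype.card_embedding_eq, Fintype.card_finset_len,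
      Fintype.card_fin, descFactorial_eq_factorial_mul_choose]
    ring
  have term_le : ∀ a ∈ Icc k n, (n.choose a * a ! * (a - 1).choose (k - 1) : ℝ)
      ≤ n.descFactorial a * 2 ^ a / 2 := by
    intro a ha
    rw [le_div_iff₀ two_pos, mul_comm]
    exact_mod_cast two_mul_choose_mul_factorial_mul_choose_le
      (hk.trans (mem_Icc.1 ha).1) n (k - 1)
  calc ∑ a ∈ Icc k n, (n.choose a * a ! * (a - 1).choose (k - 1) : ℝ)
      ≤ ∑ a ∈ Icc k n, (n.descFactorial a : ℝ) * 2 ^ a / 2 := sum_le_sum term_le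
    _ ≤ ∑ a ∈ range (n + 1), (n.descFactorial a : ℝ) * 2 ^ a / 2 :=
        sum_le_sum_of_subset_of_nonneg
          (fun a ha => mem_range.2 (Nat.lt_succ_of_le (mem_Icc.1 ha).2))
          (fun _ _ _ => by positivity)
    _ = (∑ a ∈ range (n + 1), (n.descFactorial a : ℝ) * 2 ^ a) / 2 := by rw [sum_div]
    _ ≤ Real.exp (1 / 2) * n ! * 2 ^ n / 2 := by
        gcongr
        exact sum_descFactorial_mul_pow_le two_pos n
    _ = Real.exp (1 / 2) / 2 * n ! * 2 ^ n := by ring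

/-- The number of ways to choose and linearly arrange `a` out of `n` labelled
points (an injection `Fin a ↪ Fin n`) together with a partition of the
arrangement into `k` nonempty consecutive blocks (a choice of `k−1` cut points
among the `a−1` gaps) is `C(n,a)·a!·C(a−1,k−1)`; consequently
`∑_{a=k}^{n} C(n,a)·a!·C(a−1,k−1) ≤ (e^{1/2}/2)·n!·2^n` for `n ≥ k ≥ 1`. -/
theorem stmt_7 (n k : ℕ) (hk : 1 ≤ k) (hkn : k ≤ n) :
    (∀ a : ℕ, k ≤ a → a ≤ n →
      Fintype.card ((Fin a ↪ Fin n) ×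
          {s : Finset (Fin (a - 1)) // s.card = k - 1})
        = Nat.choose n a * Nat.factorial a * Nat.choose (a - 1) (k - 1)) ∧
    (∑ a ∈ Finset.Icc k n,
        (Nat.choose n a * Nat.factorial a * Nat.choose (a - 1) (k - 1) : ℝ))
      ≤ (Real.exp (1/2) / 2) * (Nat.factorial n : ℝ) * 2 ^ n :=
  stmt_7_general n k hk
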